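/- arXiv:1802.09111 — 7 statements merged into one kernel-verified Lean document; each statement's English description precedes it below -/
import Mathlib

section
/- Let N and K be finite types, let L be a real symmetric positive semidefinite matrix indexed by N ⊕ K with block form L = [[A, C],[Cᵀ, D]] where the N×N block A is positive definite, and let S := D − Cᵀ·A⁻¹·C be the Schur complement of L onto K. Let H be a real symmetric positive semidefinite matrix indexed by K, and let ε ∈ (0,1) be such that for every real vector x indexed by K, (1−ε)·xᵀSx ≤ xᵀHx ≤ (1+ε)·xᵀSx. Then for all s, t ∈ K, for every vector y indexed by N ⊕ K satisfying L·y = χ (where χ is the vector that is +1 at the copy of s in K, −1 at the copy of t in K, and 0 elsewhere), and for every vector z indexed by K satisfying H·z = 1_s − 1_t, one has (1/(1+ε))·(y_s − y_t) ≤ z_s − z_t ≤ (1/(1−ε))·(y_s − y_t), where y_s, y_t denote the entries of y at the copies of s and t in K. In other words, a (1±ε)-approximate Schur complement of L with respect to the terminals K preserves all pairwise effective resistances between terminals up to a factor 1/(1±ε). -/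
/-!
For positive semidefinite `M` and `M u = b`, the energy `u ⬝ b` is the maximum of
`2 (w ⬝ b) - w ⬝ M w` over all `w`. Hence a quadratic-form bound `M ≤ c P` turns into the reverse
bound `c⁻¹ (v ⬝ b) ≤ u ⬝ b` between the solutions of `M u = b` and `P v = b`. Eliminating the
interior block shows that the terminal part of a solution of `L y = χ` solves the Schur complement
system, so the effective resistance in `L` is the energy of the Schur complement, and the two
sides of the spectral approximation give the two bounds.
-/

namespace Matrix

theorem IsSymm.dotProduct_mulVec_comm {n R : Type*} [Fintype n] [CommSemiring R]
    {M : Matrix n n R} (hM : M.IsSymm) (v w : n → R) :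
    v ⬝ᵥ M *ᵥ w = w ⬝ᵥ M *ᵥ v := by
  rw [dotProduct_mulVec, ← mulVec_transpose, hM.eq, dotProduct_comm]

section OrderedField

variable {n R : Type*} [Fintype n] [Field R] [LinearOrder R] [IsStrictOrderedRing R] [StarRing R]
  [TrivialStar R]

theorem PosSemidef.two_mul_dotProduct_sub_le {M : Matrix n n R} (hM : M.PosSemidef)
    {u b : n → R} (hu : M *ᵥ u = b) (w : n → R) :
    2 * (w ⬝ᵥ b) - w ⬝ᵥ M *ᵥ w ≤ u ⬝ᵥ b := by
  have h := hM.dotProduct_mulVec_nonneg (w - u)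
  rw [star_trivial, mulVec_sub, dotProduct_sub, sub_dotProduct, sub_dotProduct,
    (isHermitian_iff_isSymm.mp hM.1).dotProduct_mulVec_comm u w, hu] at h
  linarith

theorem PosSemidef.inv_mul_dotProduct_le {M P : Matrix n n R} (hM : M.PosSemidef) {c : R}
    (hMP : ∀ x, x ⬝ᵥ M *ᵥ x ≤ c * (x ⬝ᵥ P *ᵥ x)) {u v b : n → R}
    (hu : M *ᵥ u = b) (hv : P *ᵥ v = b) :
    c⁻¹ * (v ⬝ᵥ b) ≤ u ⬝ᵥ b := by
  -- test the variational bound for `u` at `w = c⁻¹ v`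
  have hquad : (c⁻¹ • v) ⬝ᵥ M *ᵥ (c⁻¹ • v) ≤ c⁻¹ * (v ⬝ᵥ b) := by
    rw [mulVec_smul, dotProduct_smul, smul_dotProduct, smul_eq_mul, smul_eq_mul, ← mul_assoc]
    calc c⁻¹ * c⁻¹ * (v ⬝ᵥ M *ᵥ v) ≤ c⁻¹ * c⁻¹ * (c * (v ⬝ᵥ b)) := by
          rw [← hv]; exact mul_le_mul_of_nonneg_left (hMP v) (mul_self_nonneg _)
      _ = c⁻¹ * (v ⬝ᵥ b) := by
          rcases eq_or_ne c 0 with rfl | hc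
          · simp
          · field_simp
  have hvar := hM.two_mul_dotProduct_sub_le hu (c⁻¹ • v)
  rw [smul_dotProduct, smul_eq_mul] at hvar
  linarith

end OrderedField

theorem schur_mulVec_inr_eq_fromBlocks_mulVec_inr {m n R : Type*} [Fintype m] [Fintype n]
    [DecidableEq m] [CommRing R] {A : Matrix m m R} [Invertible A] (B : Matrix m n R)
    (C : Matrix n m R) (D : Matrix n n R) {y : m ⊕ n → R}
    (hy : (fromBlocks A B C D *ᵥ y) ∘ Sum.inl = 0) :
    (D - C * A⁻¹ * B) *ᵥ (y ∘ Sum.inr) = (fromBlocks A B C D *ᵥ y) ∘ Sum.inr := by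
  rw [fromBlocks_mulVec] at hy ⊢
  have hy₁ : y ∘ Sum.inl = -(A⁻¹ *ᵥ B *ᵥ y ∘ Sum.inr) := by
    rw [Sum.elim_comp_inl, add_eq_zero_iff_eq_neg] at hy
    rw [← mulVec_neg, inv_mulVec_eq_vec hy.symm]
  rw [Sum.elim_comp_inr, hy₁, sub_mulVec, ← mulVec_mulVec, ← mulVec_mulVec, mulVec_neg]
  abel

end Matrix

theorem dotProduct_single_sub_single {K R : Type*} [Fintype K] [DecidableEq K] [CommRing R]
    (v : K → R) (s t : K) :
    v ⬝ᵥ (Pi.single s 1 - Pi.single t 1) = v s - v t := by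
  simp [dotProduct_sub, dotProduct_single]

open Matrix

theorem approxSchurComplement_resistance_sparsifier_general
    {N K : Type*} [Fintype N] [Fintype K] [DecidableEq N] [DecidableEq K]
    (A : Matrix N N ℝ) (C : Matrix N K ℝ) (D : Matrix K K ℝ)
    (hL : (Matrix.fromBlocks A C Cᵀ D).PosSemidef)
    (hA : A.PosDef)
    (H : Matrix K K ℝ) (hH : H.PosSemidef)
    (ε : ℝ) (hε1 : ε < 1)
    (happrox : ∀ x : K → ℝ,
      (1 - ε) * (x ⬝ᵥ (D - Cᵀ * A⁻¹ * C) *ᵥ x) ≤ x ⬝ᵥ H *ᵥ x ∧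
        x ⬝ᵥ H *ᵥ x ≤ (1 + ε) * (x ⬝ᵥ (D - Cᵀ * A⁻¹ * C) *ᵥ x)) :
    ∀ (s t : K) (y : N ⊕ K → ℝ) (z : K → ℝ),
      Matrix.fromBlocks A C Cᵀ D *ᵥ y =
        (Pi.single (Sum.inr s) 1 - Pi.single (Sum.inr t) 1) →
      H *ᵥ z = (Pi.single s 1 - Pi.single t 1) →
      (1 / (1 + ε)) * (y (Sum.inr s) - y (Sum.inr t)) ≤ z s - z t ∧
        z s - z t ≤ (1 / (1 - ε)) * (y (Sum.inr s) - y (Sum.inr t)) := by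
  intro s t y z hy hz
  have := hA.isUnit.invertible
  have hS : (D - Cᵀ * A⁻¹ * C).PosSemidef := by
    simpa using (PosDef.fromBlocks₁₁ C D hA).mp (by simpa using hL)
  have hSy : (D - Cᵀ * A⁻¹ * C) *ᵥ (y ∘ Sum.inr) = Pi.single s 1 - Pi.single t 1 := by
    rw [schur_mulVec_inr_eq_fromBlocks_mulVec_inr C Cᵀ D (by rw [hy]; ext; simp), hy]
    ext; simp [Pi.single_apply]
  have hR := dotProduct_single_sub_single (y ∘ Sum.inr) s t
  have hQ := dotProduct_single_sub_single z s t
  simp only [Function.comp_apply] at hR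
  have hε : 0 < 1 - ε := sub_pos.mpr hε1
  refine ⟨?_, ?_⟩
  · rw [one_div, ← hR, ← hQ]
    exact hH.inv_mul_dotProduct_le (fun x ↦ (happrox x).2) hz hSy
  · have hSH : ∀ x, x ⬝ᵥ (D - Cᵀ * A⁻¹ * C) *ᵥ x ≤ (1 - ε)⁻¹ * (x ⬝ᵥ H *ᵥ x) := fun x ↦ by
      rw [le_inv_mul_iff₀ hε]; exact (happrox x).1
    have hbound := hS.inv_mul_dotProduct_le hSH hSy hz
    rw [inv_inv, hQ, hR] at hbound
    rwa [one_div, le_inv_mul_iff₀ hε]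

/-- A `(1±ε)`-approximate Schur complement preserves pairwise effective resistances
among terminals up to a factor `1/(1±ε)`. Effective resistances are expressed via
solutions of the corresponding Laplacian systems. -/
theorem approxSchurComplement_resistance_sparsifier
    {N K : Type*} [Fintype N] [Fintype K] [DecidableEq N] [DecidableEq K]
    (A : Matrix N N ℝ) (C : Matrix N K ℝ) (D : Matrix K K ℝ)
    (hL : (Matrix.fromBlocks A C Cᵀ D).PosSemidef)
    (hA : A.PosDef)
    (H : Matrix K K ℝ) (hH : H.PosSemidef)
    (ε : ℝ) (hε0 : 0 < ε) (hε1 : ε < 1)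
    (happrox : ∀ x : K → ℝ,
      (1 - ε) * (x ⬝ᵥ (D - Cᵀ * A⁻¹ * C) *ᵥ x) ≤ x ⬝ᵥ H *ᵥ x ∧
        x ⬝ᵥ H *ᵥ x ≤ (1 + ε) * (x ⬝ᵥ (D - Cᵀ * A⁻¹ * C) *ᵥ x)) :
    ∀ (s t : K) (y : N ⊕ K → ℝ) (z : K → ℝ),
      Matrix.fromBlocks A C Cᵀ D *ᵥ y =
        (Pi.single (Sum.inr s) 1 - Pi.single (Sum.inr t) 1) →
      H *ᵥ z = (Pi.single s 1 - Pi.single t 1) →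
      (1 / (1 + ε)) * (y (Sum.inr s) - y (Sum.inr t)) ≤ z s - z t ∧
        z s - z t ≤ (1 / (1 - ε)) * (y (Sum.inr s) - y (Sum.inr t)) :=
  approxSchurComplement_resistance_sparsifier_general A C D hL hA H hH ε hε1 happrox
end

section
/- Let N₁, N₂ and K be finite types and let M be a real symmetric matrix indexed by (N₁ ⊕ N₂) ⊕ K. Suppose the principal block of M on N₁ is invertible and the principal block of M on N₁ ⊕ N₂ is invertible. Let M₁ denote the Schur complement of M onto N₂ ⊕ K (eliminating N₁); then the principal block of M₁ on N₂ is invertible, and the Schur complement of M₁ onto K (eliminating N₂) equals the Schur complement of M onto K (eliminating N₁ ⊕ N₂ in one step). That is, taking Schur complements with respect to a nested pair of terminal sets K ⊆ K' is the same as taking the Schur complement with respect to K directly. -/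
/-! With `P = [[A, B], [Bᵀ, E]]` and `S = E - Bᵀ A⁻¹ B`, the block-inverse formula for `P⁻¹`
pivoting on `A` gives `Cᵀ P⁻¹ C = C₁ᵀ A⁻¹ C₁ + (C₂ - Bᵀ A⁻¹ C₁)ᵀ S⁻¹ (C₂ - Bᵀ A⁻¹ C₁)`,
and `S`, `C₂ - Bᵀ A⁻¹ C₁`, `D - C₁ᵀ A⁻¹ C₁` are exactly the blocks of `M₁`. -/

open Matrix

namespace Matrix

variable {l m n o α : Type*}

theorem fromBlocks_sub [Sub α] (A : Matrix n l α) (B : Matrix n m α) (C : Matrix o l α)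
    (D : Matrix o m α) (A' : Matrix n l α) (B' : Matrix n m α) (C' : Matrix o l α)
    (D' : Matrix o m α) :
    fromBlocks A B C D - fromBlocks A' B' C' D' =
      fromBlocks (A - A') (B - B') (C - C') (D - D') := by
  ext (i | i) (j | j) <;> rfl

section CommRing

variable [Fintype m] [Fintype n] [DecidableEq m] [DecidableEq n] [CommRing α]
  {A : Matrix m m α} {B : Matrix m n α} {C : Matrix n m α} {D : Matrix n n α}

theorem isUnit_sub_mul_inv_mul_of_isUnit_fromBlocks (hA : IsUnit A)
    (h : IsUnit (fromBlocks A B C D)) : IsUnit (D - C * A⁻¹ * B) := by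
  have := hA.invertible
  rwa [← invOf_eq_nonsing_inv, ← isUnit_fromBlocks_iff_of_invertible₁₁]

theorem fromCols_mul_inv_fromBlocks_mul_fromRows (hA : IsUnit A)
    (h : IsUnit (fromBlocks A B C D)) (R₁ : Matrix l m α) (R₂ : Matrix l n α)
    (S₁ : Matrix m o α) (S₂ : Matrix n o α) :
    fromCols R₁ R₂ * (fromBlocks A B C D)⁻¹ * fromRows S₁ S₂ =
      R₁ * A⁻¹ * S₁ + (R₂ - R₁ * A⁻¹ * B) * (D - C * A⁻¹ * B)⁻¹ * (S₂ - C * A⁻¹ * S₁) := by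
  have := hA.invertible
  have := h.invertible
  have := invertibleOfFromBlocks₁₁Invertible A B C D
  simp only [← invOf_eq_nonsing_inv, invOf_fromBlocks₁₁_eq, fromCols_mul_fromBlocks,
    fromCols_mul_fromRows]
  simp only [Matrix.mul_sub, Matrix.sub_mul, Matrix.mul_add, Matrix.add_mul,
    Matrix.mul_neg, Matrix.neg_mul, Matrix.mul_assoc]
  abel

end CommRing

end Matrix

theorem schur_complement_quotient_general
    {N₁ N₂ K : Type*} [Fintype N₁] [Fintype N₂]
    [DecidableEq N₁] [DecidableEq N₂]
    (A : Matrix N₁ N₁ ℝ) (B : Matrix N₁ N₂ ℝ) (C₁ : Matrix N₁ K ℝ)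
    (E : Matrix N₂ N₂ ℝ) (C₂ : Matrix N₂ K ℝ) (D : Matrix K K ℝ)
    (hAunit : IsUnit A)
    (hPunit : IsUnit (Matrix.fromBlocks A B Bᵀ E)) :
    let M₁ : Matrix (N₂ ⊕ K) (N₂ ⊕ K) ℝ :=
      Matrix.fromBlocks E C₂ C₂ᵀ D -
        (Matrix.fromCols B C₁)ᵀ * A⁻¹ * Matrix.fromCols B C₁
    IsUnit M₁.toBlocks₁₁ ∧
      M₁.toBlocks₂₂ - M₁.toBlocks₂₁ * M₁.toBlocks₁₁⁻¹ * M₁.toBlocks₁₂ =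
        D - (Matrix.fromRows C₁ C₂)ᵀ * (Matrix.fromBlocks A B Bᵀ E)⁻¹ *
          Matrix.fromRows C₁ C₂ := by
  intro M₁
  have hM₁ : M₁ = fromBlocks (E - Bᵀ * A⁻¹ * B) (C₂ - Bᵀ * A⁻¹ * C₁)
      (C₂ᵀ - C₁ᵀ * A⁻¹ * B) (D - C₁ᵀ * A⁻¹ * C₁) := by
    simp only [M₁]
    rw [transpose_fromCols, fromRows_mul, fromRows_mul_fromCols, fromBlocks_sub]
  rw [hM₁, toBlocks_fromBlocks₁₁, toBlocks_fromBlocks₁₂, toBlocks_fromBlocks₂₁,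
    toBlocks_fromBlocks₂₂, transpose_fromRows,
    fromCols_mul_inv_fromBlocks_mul_fromRows hAunit hPunit, sub_sub]
  exact ⟨isUnit_sub_mul_inv_mul_of_isUnit_fromBlocks hAunit hPunit, rfl⟩

/-- Quotient (transitivity) property of Schur complements: for a symmetric matrix
`M` on `(N₁ ⊕ N₂) ⊕ K` with blocks `A, B, C₁, E, C₂, D`, if the principal block `A`
on `N₁` and the principal block `[[A,B],[Bᵀ,E]]` on `N₁ ⊕ N₂` are invertible, then
the `N₂` principal block of the Schur complement `M₁` of `M` onto `N₂ ⊕ K`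
(eliminating `N₁`) is invertible, and the Schur complement of `M₁` onto `K`
equals the Schur complement of `M` onto `K` taken in one step. -/
theorem schur_complement_quotient
    {N₁ N₂ K : Type*} [Fintype N₁] [Fintype N₂] [Fintype K]
    [DecidableEq N₁] [DecidableEq N₂] [DecidableEq K]
    (A : Matrix N₁ N₁ ℝ) (B : Matrix N₁ N₂ ℝ) (C₁ : Matrix N₁ K ℝ)
    (E : Matrix N₂ N₂ ℝ) (C₂ : Matrix N₂ K ℝ) (D : Matrix K K ℝ)
    (hA : A.IsSymm) (hE : E.IsSymm) (hD : D.IsSymm)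
    (hAunit : IsUnit A)
    (hPunit : IsUnit (Matrix.fromBlocks A B Bᵀ E)) :
    let M₁ : Matrix (N₂ ⊕ K) (N₂ ⊕ K) ℝ :=
      Matrix.fromBlocks E C₂ C₂ᵀ D -
        (Matrix.fromCols B C₁)ᵀ * A⁻¹ * Matrix.fromCols B C₁
    IsUnit M₁.toBlocks₁₁ ∧
      M₁.toBlocks₂₂ - M₁.toBlocks₂₁ * M₁.toBlocks₁₁⁻¹ * M₁.toBlocks₁₂ =
        D - (Matrix.fromRows C₁ C₂)ᵀ * (Matrix.fromBlocks A B Bᵀ E)⁻¹ *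
          Matrix.fromRows C₁ C₂ :=
  schur_complement_quotient_general A B C₁ E C₂ D hAunit hPunit
end

section
/- Let N₁, N₂ and K be finite types, and let L be a real symmetric positive semidefinite matrix indexed by N₁ ⊕ N₂ ⊕ K whose principal block on N₁ ⊕ N₂ is positive definite. Let ε ∈ (0,1). Let M' be a real symmetric positive semidefinite matrix indexed by N₂ ⊕ K that is a (1±ε)-spectral approximation of S(L, N₂⊕K), the Schur complement of L onto N₂ ⊕ K (eliminating N₁). Then the principal block of M' on N₂ is positive definite, so the Schur complement S(M', K) of M' onto K is defined; and if M'' is a real symmetric matrix indexed by K that is a (1±ε)-spectral approximation of S(M', K), then M'' is a (1±ε)²-spectral approximation of S(L, K), i.e., for every real vector x indexed by K, (1−ε)²·xᵀS(L,K)x ≤ xᵀM''x ≤ (1+ε)²·xᵀS(L,K)x. -/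
/-!
For symmetric `M = [[A, B], [Bᵀ, D]]` with `A ≻ 0`, completing the square gives
`(x, y)ᵀ M (x, y) = (x + A⁻¹ B y)ᵀ A (x + A⁻¹ B y) + yᵀ S y`, so `yᵀ S y` is the minimum over `x`
of `(x, y)ᵀ M (x, y)`. Eliminating `N₁ ⊕ N₂` at once or first `N₁` and then `N₂` are thus two
ways of minimising the same function, and two-sided bounds `c₁ f ≤ g ≤ c₂ f` between quadratic
forms pass to their minima. Hence `S(M', K)` is a `(1 ± ε)`-approximation of `S(L, K)`, and
composing with `M'' ≈ S(M', K)` multiplies the factors. The block `M'₁₁` is positive definite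
because `M'` dominates `(1 - ε) S(L, N₂ ⊕ K)`, whose value at `(v, 0)` is a value of the positive
definite block of `L` on `N₁ ⊕ N₂`.
-/

open Matrix Set

lemma isLeast_range_of_isLeast_uncurry {α β γ : Type*} [PartialOrder γ] {F : α → β → γ}
    {g : β → γ} {s : γ} (hF : IsLeast (range (Function.uncurry F)) s)
    (hg : ∀ y, IsLeast (range (F · y)) (g y)) : IsLeast (range g) s := by
  obtain ⟨⟨⟨z, y⟩, rfl⟩, hmin⟩ := hF
  refine ⟨⟨y, le_antisymm ((hg y).2 ⟨z, rfl⟩) ?_⟩, ?_⟩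
  · obtain ⟨z', hz'⟩ := (hg y).1
    exact hz' ▸ hmin ⟨(z', y), rfl⟩
  · rintro _ ⟨y', rfl⟩
    obtain ⟨z', hz'⟩ := (hg y').1
    exact hz' ▸ hmin ⟨(z', y'), rfl⟩

lemma IsLeast.mul_le_of_forall_mul_le {ι R : Type*} [Mul R] [Zero R] [Preorder R] [PosMulMono R]
    {f g : ι → R} {s t c : R}
    (hs : IsLeast (range f) s) (ht : IsLeast (range g) t) (hc : 0 ≤ c)
    (h : ∀ i, c * f i ≤ g i) : c * s ≤ t := by
  obtain ⟨i, rfl⟩ := ht.1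
  exact (mul_le_mul_of_nonneg_left (hs.2 ⟨i, rfl⟩) hc).trans (h i)

lemma IsLeast.le_mul_of_forall_le_mul {ι R : Type*} [Mul R] [Preorder R] {f g : ι → R} {s t c : R}
    (hs : IsLeast (range f) s) (ht : IsLeast (range g) t) (h : ∀ i, g i ≤ c * f i) :
    t ≤ c * s := by
  obtain ⟨i, rfl⟩ := hs.1
  exact (ht.2 ⟨i, rfl⟩).trans (h i)

namespace Matrix

variable {m n : Type*} [Fintype m] [Fintype n]

noncomputable def schurCompl [DecidableEq m] (M : Matrix (m ⊕ n) (m ⊕ n) ℝ) : Matrix n n ℝ :=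
  M.toBlocks₂₂ - M.toBlocks₂₁ * M.toBlocks₁₁⁻¹ * M.toBlocks₁₂

lemma sumElim_zero_dotProduct_mulVec (M : Matrix (m ⊕ n) (m ⊕ n) ℝ) (x : m → ℝ) :
    Sum.elim x 0 ⬝ᵥ M *ᵥ Sum.elim x 0 = x ⬝ᵥ M.toBlocks₁₁ *ᵥ x := by
  nth_rewrite 1 [← fromBlocks_toBlocks M]
  simp [fromBlocks_mulVec, sumElim_dotProduct_sumElim]

lemma dotProduct_mulVec_submatrix_equiv (M : Matrix n n ℝ) (e : m ≃ n) (v : m → ℝ) :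
    v ⬝ᵥ M.submatrix e e *ᵥ v = (v ∘ e.symm) ⬝ᵥ M *ᵥ (v ∘ e.symm) := by
  rw [submatrix_mulVec_equiv, ← comp_equiv_symm_dotProduct]

lemma isLeast_schurCompl [DecidableEq m] {M : Matrix (m ⊕ n) (m ⊕ n) ℝ} (hM : M.IsHermitian)
    (hA : M.toBlocks₁₁.PosDef) (y : n → ℝ) :
    IsLeast (range fun x => Sum.elim x y ⬝ᵥ M *ᵥ Sum.elim x y) (y ⬝ᵥ M.schurCompl *ᵥ y) := by
  have : Invertible M.toBlocks₁₁ := invertibleOfIsUnitDet _ hA.det_pos.ne'.isUnit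
  have hB : M.toBlocks₂₁ = M.toBlocks₁₂ᴴ :=
    (isHermitian_fromBlocks_iff.1 (by rwa [fromBlocks_toBlocks])).2.1.symm
  set u := (M.toBlocks₁₁⁻¹ * M.toBlocks₁₂) *ᵥ y
  have hsq (x : m → ℝ) : Sum.elim x y ⬝ᵥ M *ᵥ Sum.elim x y =
      (x + u) ⬝ᵥ M.toBlocks₁₁ *ᵥ (x + u) + y ⬝ᵥ M.schurCompl *ᵥ y := by
    have := schur_complement_eq₁₁ M.toBlocks₁₂ M.toBlocks₂₂ x y hA.1
    rw [← hB, fromBlocks_toBlocks] at this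
    simp only [star_trivial, ← dotProduct_mulVec] at this
    exact this
  refine ⟨⟨-u, by simp [hsq]⟩, ?_⟩
  rintro _ ⟨x, rfl⟩
  have := hA.posSemidef.dotProduct_mulVec_nonneg (x + u)
  dsimp only
  rw [hsq]
  simp only [star_trivial] at this
  linarith

section Reassociation

variable {a b c : Type*} [Fintype a] [Fintype b] [Fintype c] [DecidableEq a] [DecidableEq b]
  {L : Matrix (a ⊕ b ⊕ c) (a ⊕ b ⊕ c) ℝ}

omit [Fintype c] in
lemma schurCompl_submatrix_sumAssoc_eq (hL : L.IsHermitian) :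
    (L.submatrix (Equiv.sumAssoc a b c) (Equiv.sumAssoc a b c)).schurCompl =
      L.submatrix (Sum.inr ∘ Sum.inr) (Sum.inr ∘ Sum.inr) -
        (L.submatrix (Sum.map id Sum.inl) (Sum.inr ∘ Sum.inr))ᵀ *
          (L.submatrix (Sum.map id Sum.inl) (Sum.map id Sum.inl))⁻¹ *
          L.submatrix (Sum.map id Sum.inl) (Sum.inr ∘ Sum.inr) := by
  rw [transpose_submatrix, (isHermitian_iff_isSymm.1 hL).eq]
  rfl

omit [DecidableEq a] [DecidableEq b] in
lemma dotProduct_mulVec_submatrix_sumAssoc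
    (z : a → ℝ) (y : b → ℝ) (x : c → ℝ) :
    Sum.elim (Sum.elim z y) x ⬝ᵥ L.submatrix (Equiv.sumAssoc a b c) (Equiv.sumAssoc a b c) *ᵥ
        Sum.elim (Sum.elim z y) x =
      Sum.elim z (Sum.elim y x) ⬝ᵥ L *ᵥ Sum.elim z (Sum.elim y x) := by
  have : Sum.elim (Sum.elim z y) x ∘ (Equiv.sumAssoc a b c).symm = Sum.elim z (Sum.elim y x) := by
    funext i; rcases i with i | i | i <;> rfl
  rw [dotProduct_mulVec_submatrix_equiv, this]

omit [DecidableEq b] in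
lemma schurCompl_sumElim_zero_pos (hL : L.IsHermitian)
    (hP : (L.submatrix (Equiv.sumAssoc a b c) (Equiv.sumAssoc a b c)).toBlocks₁₁.PosDef)
    {v : b → ℝ} (hv : v ≠ 0) :
    0 < Sum.elim v 0 ⬝ᵥ L.schurCompl *ᵥ Sum.elim v 0 := by
  obtain ⟨z, hz⟩ := (isLeast_schurCompl hL (hP.submatrix Sum.inl_injective) (Sum.elim v 0)).1
  have hzv : Sum.elim z v ≠ 0 := fun h => hv (funext fun i => congrFun h (Sum.inr i))
  have := hP.dotProduct_mulVec_pos hzv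
  rw [star_trivial, ← sumElim_zero_dotProduct_mulVec, dotProduct_mulVec_submatrix_sumAssoc] at this
  rwa [← hz]

lemma isLeast_schurCompl_schurCompl (hL : L.IsHermitian)
    (hP : (L.submatrix (Equiv.sumAssoc a b c) (Equiv.sumAssoc a b c)).toBlocks₁₁.PosDef)
    (x : c → ℝ) :
    IsLeast (range fun y => Sum.elim y x ⬝ᵥ L.schurCompl *ᵥ Sum.elim y x)
      (x ⬝ᵥ (L.submatrix (Equiv.sumAssoc a b c) (Equiv.sumAssoc a b c)).schurCompl *ᵥ x) := by
  let F (z : a → ℝ) (y : b → ℝ) := Sum.elim z (Sum.elim y x) ⬝ᵥ L *ᵥ Sum.elim z (Sum.elim y x)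
  have hF : Function.uncurry F = (fun w => Sum.elim w x ⬝ᵥ
      L.submatrix (Equiv.sumAssoc a b c) (Equiv.sumAssoc a b c) *ᵥ Sum.elim w x) ∘
        (Equiv.sumArrowEquivProdArrow a b ℝ).symm :=
    funext fun ⟨z, y⟩ => (dotProduct_mulVec_submatrix_sumAssoc z y x).symm
  refine isLeast_range_of_isLeast_uncurry (F := F) ?_
    fun y => isLeast_schurCompl hL (hP.submatrix Sum.inl_injective) _
  rw [hF, (Equiv.sumArrowEquivProdArrow a b ℝ).symm.surjective.range_comp]
  exact isLeast_schurCompl (hL.submatrix _) hP x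

end Reassociation

end Matrix

theorem approxSchurComplement_transitive_general
    {N₁ N₂ K : Type*} [Fintype N₁] [Fintype N₂] [Fintype K]
    [DecidableEq N₁] [DecidableEq N₂]
    (L : Matrix (N₁ ⊕ N₂ ⊕ K) (N₁ ⊕ N₂ ⊕ K) ℝ)
    (hL : L.PosSemidef)
    (hP : (L.submatrix (Sum.map id Sum.inl) (Sum.map id Sum.inl) :
        Matrix (N₁ ⊕ N₂) (N₁ ⊕ N₂) ℝ).PosDef)
    (ε : ℝ) (hε0 : 0 < ε) (hε1 : ε < 1)
    (M' : Matrix (N₂ ⊕ K) (N₂ ⊕ K) ℝ) (hM' : M'.PosSemidef)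
    (happrox1 : ∀ x : N₂ ⊕ K → ℝ,
      (1 - ε) * (x ⬝ᵥ (L.toBlocks₂₂ - L.toBlocks₂₁ * L.toBlocks₁₁⁻¹ * L.toBlocks₁₂) *ᵥ x)
          ≤ x ⬝ᵥ M' *ᵥ x ∧
        x ⬝ᵥ M' *ᵥ x ≤
          (1 + ε) * (x ⬝ᵥ (L.toBlocks₂₂ - L.toBlocks₂₁ * L.toBlocks₁₁⁻¹ * L.toBlocks₁₂) *ᵥ x)) :
    M'.toBlocks₁₁.PosDef ∧
      ∀ M'' : Matrix K K ℝ, M''.IsSymm →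
        (∀ x : K → ℝ,
          (1 - ε) *
              (x ⬝ᵥ (M'.toBlocks₂₂ - M'.toBlocks₂₁ * M'.toBlocks₁₁⁻¹ * M'.toBlocks₁₂) *ᵥ x)
              ≤ x ⬝ᵥ M'' *ᵥ x ∧
            x ⬝ᵥ M'' *ᵥ x ≤
              (1 + ε) *
                (x ⬝ᵥ (M'.toBlocks₂₂ - M'.toBlocks₂₁ * M'.toBlocks₁₁⁻¹ * M'.toBlocks₁₂) *ᵥ x)) →
        ∀ x : K → ℝ,
          (1 - ε) ^ 2 *
              (x ⬝ᵥ (L.submatrix (Sum.inr ∘ Sum.inr) (Sum.inr ∘ Sum.inr) -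
                (L.submatrix (Sum.map id Sum.inl) (Sum.inr ∘ Sum.inr))ᵀ *
                  (L.submatrix (Sum.map id Sum.inl) (Sum.map id Sum.inl))⁻¹ *
                  L.submatrix (Sum.map id Sum.inl) (Sum.inr ∘ Sum.inr)) *ᵥ x)
              ≤ x ⬝ᵥ M'' *ᵥ x ∧
            x ⬝ᵥ M'' *ᵥ x ≤
              (1 + ε) ^ 2 *
                (x ⬝ᵥ (L.submatrix (Sum.inr ∘ Sum.inr) (Sum.inr ∘ Sum.inr) -
                  (L.submatrix (Sum.map id Sum.inl) (Sum.inr ∘ Sum.inr))ᵀ *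
                    (L.submatrix (Sum.map id Sum.inl) (Sum.map id Sum.inl))⁻¹ *
                    L.submatrix (Sum.map id Sum.inl) (Sum.inr ∘ Sum.inr)) *ᵥ x) := by
  have hM₁₁ : M'.toBlocks₁₁.PosDef := by
    refine .of_dotProduct_mulVec_pos (hM'.1.submatrix Sum.inl) fun v hv => ?_
    have h := (happrox1 (Sum.elim v 0)).1
    rw [sumElim_zero_dotProduct_mulVec M'] at h
    rw [star_trivial]
    exact (mul_pos (sub_pos.2 hε1) (schurCompl_sumElim_zero_pos hL.1 hP hv)).trans_le h
  refine ⟨hM₁₁, fun M'' _ happrox2 x => ?_⟩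
  rw [← schurCompl_submatrix_sumAssoc_eq hL.1]
  have hS₂ := isLeast_schurCompl_schurCompl hL.1 hP x
  have hS := isLeast_schurCompl hM'.1 hM₁₁ x
  have lower := hS₂.mul_le_of_forall_mul_le hS (sub_nonneg.2 hε1.le) fun _ => (happrox1 _).1
  have upper := hS₂.le_mul_of_forall_le_mul hS fun _ => (happrox1 _).2
  obtain ⟨h₂l, h₂u⟩ : (1 - ε) * (x ⬝ᵥ M'.schurCompl *ᵥ x) ≤ x ⬝ᵥ M'' *ᵥ x ∧
      x ⬝ᵥ M'' *ᵥ x ≤ (1 + ε) * (x ⬝ᵥ M'.schurCompl *ᵥ x) := happrox2 x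
  constructor
  · linarith [mul_le_mul_of_nonneg_left lower (sub_nonneg.2 hε1.le)]
  · linarith [mul_le_mul_of_nonneg_left upper (by linarith : (0 : ℝ) ≤ 1 + ε)]

/-- Transitivity of approximate Schur complements: if `M'` is a `(1±ε)`-spectral
approximation of the Schur complement `S(L, N₂⊕K)` (eliminating `N₁`), then the
`N₂` principal block of `M'` is positive definite, and any `(1±ε)`-spectral
approximation `M''` of `S(M', K)` is a `(1±ε)²`-spectral approximation of
`S(L, K)` (the Schur complement of `L` onto `K`, eliminating `N₁ ⊕ N₂`). -/
theorem approxSchurComplement_transitive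
    {N₁ N₂ K : Type*} [Fintype N₁] [Fintype N₂] [Fintype K]
    [DecidableEq N₁] [DecidableEq N₂] [DecidableEq K]
    (L : Matrix (N₁ ⊕ N₂ ⊕ K) (N₁ ⊕ N₂ ⊕ K) ℝ)
    (hL : L.PosSemidef)
    (hP : (L.submatrix (Sum.map id Sum.inl) (Sum.map id Sum.inl) :
        Matrix (N₁ ⊕ N₂) (N₁ ⊕ N₂) ℝ).PosDef)
    (ε : ℝ) (hε0 : 0 < ε) (hε1 : ε < 1)
    (M' : Matrix (N₂ ⊕ K) (N₂ ⊕ K) ℝ) (hM' : M'.PosSemidef)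
    (happrox1 : ∀ x : N₂ ⊕ K → ℝ,
      (1 - ε) * (x ⬝ᵥ (L.toBlocks₂₂ - L.toBlocks₂₁ * L.toBlocks₁₁⁻¹ * L.toBlocks₁₂) *ᵥ x)
          ≤ x ⬝ᵥ M' *ᵥ x ∧
        x ⬝ᵥ M' *ᵥ x ≤
          (1 + ε) * (x ⬝ᵥ (L.toBlocks₂₂ - L.toBlocks₂₁ * L.toBlocks₁₁⁻¹ * L.toBlocks₁₂) *ᵥ x)) :
    M'.toBlocks₁₁.PosDef ∧
      ∀ M'' : Matrix K K ℝ, M''.IsSymm →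
        (∀ x : K → ℝ,
          (1 - ε) *
              (x ⬝ᵥ (M'.toBlocks₂₂ - M'.toBlocks₂₁ * M'.toBlocks₁₁⁻¹ * M'.toBlocks₁₂) *ᵥ x)
              ≤ x ⬝ᵥ M'' *ᵥ x ∧
            x ⬝ᵥ M'' *ᵥ x ≤
              (1 + ε) *
                (x ⬝ᵥ (M'.toBlocks₂₂ - M'.toBlocks₂₁ * M'.toBlocks₁₁⁻¹ * M'.toBlocks₁₂) *ᵥ x)) →
        ∀ x : K → ℝ,
          (1 - ε) ^ 2 *
              (x ⬝ᵥ (L.submatrix (Sum.inr ∘ Sum.inr) (Sum.inr ∘ Sum.inr) -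
                (L.submatrix (Sum.map id Sum.inl) (Sum.inr ∘ Sum.inr))ᵀ *
                  (L.submatrix (Sum.map id Sum.inl) (Sum.map id Sum.inl))⁻¹ *
                  L.submatrix (Sum.map id Sum.inl) (Sum.inr ∘ Sum.inr)) *ᵥ x)
              ≤ x ⬝ᵥ M'' *ᵥ x ∧
            x ⬝ᵥ M'' *ᵥ x ≤
              (1 + ε) ^ 2 *
                (x ⬝ᵥ (L.submatrix (Sum.inr ∘ Sum.inr) (Sum.inr ∘ Sum.inr) -
                  (L.submatrix (Sum.map id Sum.inl) (Sum.inr ∘ Sum.inr))ᵀ *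
                    (L.submatrix (Sum.map id Sum.inl) (Sum.map id Sum.inl))⁻¹ *
                    L.submatrix (Sum.map id Sum.inl) (Sum.inr ∘ Sum.inr)) *ᵥ x) :=
  approxSchurComplement_transitive_general L hL hP ε hε0 hε1 M' hM' happrox1
end

section
/- Let N₁, N₂ and K be finite types. For i = 1, 2, let Mᵢ be a real symmetric matrix indexed by Nᵢ ⊕ K with block form Mᵢ = [[Aᵢ, Cᵢ],[Cᵢᵀ, Dᵢ]], where Aᵢ is invertible. Let M be the real symmetric matrix indexed by (N₁ ⊕ N₂) ⊕ K whose block on N₁ ⊕ N₂ is the block-diagonal matrix diag(A₁, A₂), whose (N₁ ⊕ N₂)×K block stacks C₁ on top of C₂, and whose K×K block is D₁ + D₂. Then the Schur complement of M onto K equals the sum of the Schur complements of M₁ and M₂ onto K: S(M, K) = S(M₁, K) + S(M₂, K) = (D₁ + D₂) − C₁ᵀ·A₁⁻¹·C₁ − C₂ᵀ·A₂⁻¹·C₂. -/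
open Matrix

namespace Matrix

variable {l m n p : Type*} [Fintype m] [Fintype n] [DecidableEq m] [DecidableEq n]
  {R : Type*} [CommRing R]

theorem inv_fromBlocks_zero_zero_of_isUnit_iff (A : Matrix m m R) (D : Matrix n n R)
    (hAD : IsUnit A ↔ IsUnit D) :
    (fromBlocks A 0 0 D)⁻¹ = fromBlocks A⁻¹ 0 0 D⁻¹ := by
  simp [inv_fromBlocks_zero₂₁_of_isUnit_iff A 0 D hAD]

theorem fromCols_mul_inv_fromBlocks_zero_zero_mul_fromRows (X₁ : Matrix l m R)
    (X₂ : Matrix l n R) (A : Matrix m m R) (D : Matrix n n R) (Y₁ : Matrix m p R)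
    (Y₂ : Matrix n p R) (hAD : IsUnit A ↔ IsUnit D) :
    fromCols X₁ X₂ * (fromBlocks A 0 0 D)⁻¹ * fromRows Y₁ Y₂ =
      X₁ * A⁻¹ * Y₁ + X₂ * D⁻¹ * Y₂ := by
  simp [inv_fromBlocks_zero_zero_of_isUnit_iff A D hAD, fromCols_mul_fromBlocks,
    fromCols_mul_fromRows]

end Matrix

theorem schur_complement_composable_general
    {N₁ N₂ K : Type*} [Fintype N₁] [Fintype N₂]
    [DecidableEq N₁] [DecidableEq N₂]
    (A₁ : Matrix N₁ N₁ ℝ) (C₁ : Matrix N₁ K ℝ) (D₁ : Matrix K K ℝ)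
    (A₂ : Matrix N₂ N₂ ℝ) (C₂ : Matrix N₂ K ℝ) (D₂ : Matrix K K ℝ)
    (hA₁ : IsUnit A₁) (hA₂ : IsUnit A₂) :
    (D₁ + D₂) -
        (Matrix.fromRows C₁ C₂)ᵀ * (Matrix.fromBlocks A₁ 0 0 A₂)⁻¹ *
          Matrix.fromRows C₁ C₂ =
      (D₁ - C₁ᵀ * A₁⁻¹ * C₁) + (D₂ - C₂ᵀ * A₂⁻¹ * C₂) := by
  rw [transpose_fromRows,
    fromCols_mul_inv_fromBlocks_zero_zero_mul_fromRows _ _ _ _ _ _ (iff_of_true hA₁ hA₂)]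
  abel

/-- Composability of Schur complements: if the merged matrix `M` on `(N₁ ⊕ N₂) ⊕ K`
has block-diagonal non-terminal block `diag(A₁, A₂)`, stacked off-diagonal block
`[C₁; C₂]`, and terminal block `D₁ + D₂`, then its Schur complement onto `K` is the
sum of the Schur complements of `M₁ = [[A₁,C₁],[C₁ᵀ,D₁]]` and `M₂ = [[A₂,C₂],[C₂ᵀ,D₂]]`. -/
theorem schur_complement_composable
    {N₁ N₂ K : Type*} [Fintype N₁] [Fintype N₂] [Fintype K]
    [DecidableEq N₁] [DecidableEq N₂] [DecidableEq K]
    (A₁ : Matrix N₁ N₁ ℝ) (C₁ : Matrix N₁ K ℝ) (D₁ : Matrix K K ℝ)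
    (A₂ : Matrix N₂ N₂ ℝ) (C₂ : Matrix N₂ K ℝ) (D₂ : Matrix K K ℝ)
    (hM₁ : (Matrix.fromBlocks A₁ C₁ C₁ᵀ D₁).IsSymm)
    (hM₂ : (Matrix.fromBlocks A₂ C₂ C₂ᵀ D₂).IsSymm)
    (hA₁ : IsUnit A₁) (hA₂ : IsUnit A₂) :
    (D₁ + D₂) -
        (Matrix.fromRows C₁ C₂)ᵀ * (Matrix.fromBlocks A₁ 0 0 A₂)⁻¹ *
          Matrix.fromRows C₁ C₂ =
      (D₁ - C₁ᵀ * A₁⁻¹ * C₁) + (D₂ - C₂ᵀ * A₂⁻¹ * C₂) :=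
  schur_complement_composable_general A₁ C₁ D₁ A₂ C₂ D₂ hA₁ hA₂
end

section
/- Let N₁, N₂ and K be finite types, and let ε ∈ (0,1). For i = 1, 2, let Mᵢ be a real symmetric matrix indexed by Nᵢ ⊕ K with block form Mᵢ = [[Aᵢ, Cᵢ],[Cᵢᵀ, Dᵢ]], where Aᵢ is invertible, and let Hᵢ be a real symmetric matrix indexed by K that is a (1±ε)-spectral approximation of the Schur complement S(Mᵢ, K). Let M be the real symmetric matrix indexed by (N₁ ⊕ N₂) ⊕ K whose block on N₁ ⊕ N₂ is diag(A₁, A₂), whose (N₁ ⊕ N₂)×K block stacks C₁ on top of C₂, and whose K×K block is D₁ + D₂. Then H₁ + H₂ is a (1±ε)-spectral approximation of the Schur complement S(M, K). -/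
open Matrix

/-!
The Schur complement of a block-diagonal `A = diag(A₁, A₂)` splits: since
`A⁻¹ = diag(A₁⁻¹, A₂⁻¹)`, the correction `Cᵀ A⁻¹ C` for `C = [C₁; C₂]` is
`C₁ᵀ A₁⁻¹ C₁ + C₂ᵀ A₂⁻¹ C₂`, so `S(M, K) = S(M₁, K) + S(M₂, K)`. Two-sided bounds on
quadratic forms add up, hence `H₁ + H₂` approximates this sum.
-/

namespace Matrix

/-- The Schur complement of the block `A` in `[[A, C], [Cᵀ, D]]`. -/
noncomputable def schurComplement {n k R : Type*} [Fintype n] [DecidableEq n] [CommRing R]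
    (A : Matrix n n R) (C : Matrix n k R) (D : Matrix k k R) : Matrix k k R :=
  D - Cᵀ * A⁻¹ * C

def IsSpectralApprox {k R : Type*} [Fintype k] [CommRing R] [PartialOrder R]
    (ε : R) (A B : Matrix k k R) : Prop :=
  ∀ x : k → R, (1 - ε) * (x ⬝ᵥ A *ᵥ x) ≤ x ⬝ᵥ B *ᵥ x ∧ x ⬝ᵥ B *ᵥ x ≤ (1 + ε) * (x ⬝ᵥ A *ᵥ x)

theorem IsSpectralApprox.add {k R : Type*} [Fintype k] [CommRing R] [PartialOrder R]
    [IsOrderedRing R] {ε : R} {A₁ A₂ B₁ B₂ : Matrix k k R}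
    (h₁ : IsSpectralApprox ε A₁ B₁) (h₂ : IsSpectralApprox ε A₂ B₂) :
    IsSpectralApprox ε (A₁ + A₂) (B₁ + B₂) := by
  intro x
  simp only [add_mulVec, dotProduct_add, mul_add]
  exact ⟨add_le_add (h₁ x).1 (h₂ x).1, add_le_add (h₁ x).2 (h₂ x).2⟩

theorem schurComplement_fromBlocks_diagonal {n₁ n₂ k R : Type*} [Fintype n₁] [Fintype n₂]
    [DecidableEq n₁] [DecidableEq n₂] [CommRing R]
    {A₁ : Matrix n₁ n₁ R} {A₂ : Matrix n₂ n₂ R} (hA₁ : IsUnit A₁) (hA₂ : IsUnit A₂)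
    (C₁ : Matrix n₁ k R) (C₂ : Matrix n₂ k R) (D₁ D₂ : Matrix k k R) :
    schurComplement (fromBlocks A₁ 0 0 A₂) (fromRows C₁ C₂) (D₁ + D₂) =
      schurComplement A₁ C₁ D₁ + schurComplement A₂ C₂ D₂ := by
  have hinv : (fromBlocks A₁ (0 : Matrix n₁ n₂ R) 0 A₂)⁻¹ = fromBlocks A₁⁻¹ 0 0 A₂⁻¹ := by
    rw [inv_fromBlocks_zero₂₁_of_isUnit_iff _ _ _ (iff_of_true hA₁ hA₂)]
    simp
  simp only [schurComplement, hinv, transpose_fromRows, fromCols_mul_fromBlocks,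
    fromCols_mul_fromRows, Matrix.mul_zero, add_zero, zero_add,
    Matrix.mul_assoc]
  abel

end Matrix

theorem approxSchurComplement_composable_general
    {N₁ N₂ K : Type*} [Fintype N₁] [Fintype N₂] [Fintype K]
    [DecidableEq N₁] [DecidableEq N₂]
    (ε : ℝ)
    (A₁ : Matrix N₁ N₁ ℝ) (C₁ : Matrix N₁ K ℝ) (D₁ : Matrix K K ℝ)
    (A₂ : Matrix N₂ N₂ ℝ) (C₂ : Matrix N₂ K ℝ) (D₂ : Matrix K K ℝ)
    (hA₁ : IsUnit A₁) (hA₂ : IsUnit A₂)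
    (H₁ H₂ : Matrix K K ℝ)
    (happrox₁ : ∀ x : K → ℝ,
      (1 - ε) * (x ⬝ᵥ (D₁ - C₁ᵀ * A₁⁻¹ * C₁) *ᵥ x) ≤ x ⬝ᵥ H₁ *ᵥ x ∧
        x ⬝ᵥ H₁ *ᵥ x ≤ (1 + ε) * (x ⬝ᵥ (D₁ - C₁ᵀ * A₁⁻¹ * C₁) *ᵥ x))
    (happrox₂ : ∀ x : K → ℝ,
      (1 - ε) * (x ⬝ᵥ (D₂ - C₂ᵀ * A₂⁻¹ * C₂) *ᵥ x) ≤ x ⬝ᵥ H₂ *ᵥ x ∧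
        x ⬝ᵥ H₂ *ᵥ x ≤ (1 + ε) * (x ⬝ᵥ (D₂ - C₂ᵀ * A₂⁻¹ * C₂) *ᵥ x)) :
    ∀ x : K → ℝ,
      (1 - ε) * (x ⬝ᵥ ((D₁ + D₂) -
          (Matrix.fromRows C₁ C₂)ᵀ * (Matrix.fromBlocks A₁ 0 0 A₂)⁻¹ *
            Matrix.fromRows C₁ C₂) *ᵥ x)
          ≤ x ⬝ᵥ (H₁ + H₂) *ᵥ x ∧
        x ⬝ᵥ (H₁ + H₂) *ᵥ x ≤
          (1 + ε) * (x ⬝ᵥ ((D₁ + D₂) -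
            (Matrix.fromRows C₁ C₂)ᵀ * (Matrix.fromBlocks A₁ 0 0 A₂)⁻¹ *
              Matrix.fromRows C₁ C₂) *ᵥ x) := by
  have happrox : IsSpectralApprox ε
      (schurComplement A₁ C₁ D₁ + schurComplement A₂ C₂ D₂) (H₁ + H₂) :=
    IsSpectralApprox.add happrox₁ happrox₂
  rwa [← schurComplement_fromBlocks_diagonal hA₁ hA₂] at happrox

/-- Composability of approximate Schur complements: if `Hᵢ` is a `(1±ε)`-spectral
approximation of the Schur complement of `Mᵢ = [[Aᵢ,Cᵢ],[Cᵢᵀ,Dᵢ]]` onto `K`, for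
`i = 1, 2`, then `H₁ + H₂` is a `(1±ε)`-spectral approximation of the Schur
complement onto `K` of the merged matrix `M` with blocks `diag(A₁,A₂)`, `[C₁; C₂]`,
and `D₁ + D₂`. -/
theorem approxSchurComplement_composable
    {N₁ N₂ K : Type*} [Fintype N₁] [Fintype N₂] [Fintype K]
    [DecidableEq N₁] [DecidableEq N₂] [DecidableEq K]
    (ε : ℝ) (hε0 : 0 < ε) (hε1 : ε < 1)
    (A₁ : Matrix N₁ N₁ ℝ) (C₁ : Matrix N₁ K ℝ) (D₁ : Matrix K K ℝ)
    (A₂ : Matrix N₂ N₂ ℝ) (C₂ : Matrix N₂ K ℝ) (D₂ : Matrix K K ℝ)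
    (hM₁ : (Matrix.fromBlocks A₁ C₁ C₁ᵀ D₁).IsSymm)
    (hM₂ : (Matrix.fromBlocks A₂ C₂ C₂ᵀ D₂).IsSymm)
    (hA₁ : IsUnit A₁) (hA₂ : IsUnit A₂)
    (H₁ H₂ : Matrix K K ℝ) (hH₁ : H₁.IsSymm) (hH₂ : H₂.IsSymm)
    (happrox₁ : ∀ x : K → ℝ,
      (1 - ε) * (x ⬝ᵥ (D₁ - C₁ᵀ * A₁⁻¹ * C₁) *ᵥ x) ≤ x ⬝ᵥ H₁ *ᵥ x ∧
        x ⬝ᵥ H₁ *ᵥ x ≤ (1 + ε) * (x ⬝ᵥ (D₁ - C₁ᵀ * A₁⁻¹ * C₁) *ᵥ x))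
    (happrox₂ : ∀ x : K → ℝ,
      (1 - ε) * (x ⬝ᵥ (D₂ - C₂ᵀ * A₂⁻¹ * C₂) *ᵥ x) ≤ x ⬝ᵥ H₂ *ᵥ x ∧
        x ⬝ᵥ H₂ *ᵥ x ≤ (1 + ε) * (x ⬝ᵥ (D₂ - C₂ᵀ * A₂⁻¹ * C₂) *ᵥ x)) :
    ∀ x : K → ℝ,
      (1 - ε) * (x ⬝ᵥ ((D₁ + D₂) -
          (Matrix.fromRows C₁ C₂)ᵀ * (Matrix.fromBlocks A₁ 0 0 A₂)⁻¹ *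
            Matrix.fromRows C₁ C₂) *ᵥ x)
          ≤ x ⬝ᵥ (H₁ + H₂) *ᵥ x ∧
        x ⬝ᵥ (H₁ + H₂) *ᵥ x ≤
          (1 + ε) * (x ⬝ᵥ ((D₁ + D₂) -
            (Matrix.fromRows C₁ C₂)ᵀ * (Matrix.fromBlocks A₁ 0 0 A₂)⁻¹ *
              Matrix.fromRows C₁ C₂) *ᵥ x) :=
  approxSchurComplement_composable_general ε A₁ C₁ D₁ A₂ C₂ D₂ hA₁ hA₂ H₁ H₂ happrox₁ happrox₂
end

section
/- Let W be a finite type, let t ∈ W, and let B be a real symmetric invertible matrix indexed by W. Let v := B·𝟙, where 𝟙 is the all-ones vector indexed by W, and let σ := Σ_{u ∈ W} v_u. Let L be the real symmetric matrix indexed by W ⊕ Unit given in block form by L = [[B, −v],[−vᵀ, σ]], and write s for the vertex in the Unit summand. Then for every vector y indexed by W ⊕ Unit satisfying L·y = 1_s − 1_t (the vector that is +1 at s, −1 at t, and 0 elsewhere), one has y_s − y_t = (B⁻¹)_{t,t}. In particular, the s–t effective resistance of the weighted graph whose Laplacian is L equals the (t,t)-entry of B⁻¹. -/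
open Matrix

/-!
Write `c = y_s`. Since the off-diagonal block is `-B𝟙`, the `W`-rows of `L y = 1_s - 1_t` say
`B (y|_W - c𝟙) = -1_t`, so `y|_W - c𝟙 = -B⁻¹ 1_t`; reading off the `t`-entry gives
`y_t - y_s = -(B⁻¹)_{t,t}`.
-/

namespace Matrix

variable {m n o R : Type*} [Fintype n]

theorem eq_inv_mulVec_of_mulVec_eq [DecidableEq n] [CommRing R] {B : Matrix n n R}
    (hB : IsUnit B) {z b : n → R} (h : B *ᵥ z = b) : z = B⁻¹ *ᵥ b := by
  have := hB.invertible
  exact (inv_mulVec_eq_vec h.symm).symm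

theorem fromBlocks_neg_mulVec_one_mulVec_inl [Ring R] (B : Matrix m n R)
    (C : Matrix o n R) (D : Matrix o Unit R) (y : n ⊕ Unit → R) (w : m) :
    (fromBlocks B (of fun w (_ : Unit) => -(B *ᵥ fun _ => 1) w) C D *ᵥ y) (Sum.inl w) =
      (B *ᵥ fun u => y (Sum.inl u) - y (Sum.inr ())) w := by
  simp [mulVec, dotProduct, mul_sub, Finset.sum_mul, ← sub_eq_add_neg]

end Matrix

theorem effectiveResistance_eq_inverse_diagonal_entry_general
    {W : Type*} [Fintype W] [DecidableEq W] (t : W)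
    (B : Matrix W W ℝ) (hBu : IsUnit B) :
    ∀ y : W ⊕ Unit → ℝ,
      Matrix.fromBlocks B
          (Matrix.of fun w (_ : Unit) => -((B *ᵥ fun _ => 1) w))
          (Matrix.of fun (_ : Unit) w => -((B *ᵥ fun _ => 1) w))
          (Matrix.of fun (_ : Unit) (_ : Unit) => ∑ u, (B *ᵥ fun _ => 1) u) *ᵥ y =
        (Pi.single (Sum.inr ()) 1 - Pi.single (Sum.inl t) 1) →
      y (Sum.inr ()) - y (Sum.inl t) = B⁻¹ t t := by
  intro y hy
  have hW : B *ᵥ (fun u => y (Sum.inl u) - y (Sum.inr ())) = Pi.single t (-1) := by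
    ext w
    rw [← fromBlocks_neg_mulVec_one_mulVec_inl, hy]
    by_cases hw : w = t <;> simp [hw]
  have ht := congrFun (eq_inv_mulVec_of_mulVec_eq hBu hW) t
  simp only [mulVec_single, Pi.smul_apply, col_apply, MulOpposite.smul_eq_mul_unop,
    MulOpposite.unop_op] at ht
  linarith

/-- The `s–t` effective resistance equals a diagonal entry of an inverse: for a
symmetric invertible `B` indexed by `W`, `v = B·𝟙`, `σ = Σ_u v_u`, and the
Laplacian-type matrix `L = [[B, −v],[−vᵀ, σ]]` on `W ⊕ Unit` (with `s` the extra
vertex), every solution `y` of `L·y = 1_s − 1_t` satisfies `y_s − y_t = (B⁻¹)_{t,t}`. -/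
theorem effectiveResistance_eq_inverse_diagonal_entry
    {W : Type*} [Fintype W] [DecidableEq W] (t : W)
    (B : Matrix W W ℝ) (hB : B.IsSymm) (hBu : IsUnit B) :
    ∀ y : W ⊕ Unit → ℝ,
      Matrix.fromBlocks B
          (Matrix.of fun w (_ : Unit) => -((B *ᵥ fun _ => 1) w))
          (Matrix.of fun (_ : Unit) w => -((B *ᵥ fun _ => 1) w))
          (Matrix.of fun (_ : Unit) (_ : Unit) => ∑ u, (B *ᵥ fun _ => 1) u) *ᵥ y =
        (Pi.single (Sum.inr ()) 1 - Pi.single (Sum.inl t) 1) →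
      y (Sum.inr ()) - y (Sum.inl t) = B⁻¹ t t :=
  effectiveResistance_eq_inverse_diagonal_entry_general t B hBu
end

section
/- Let G be a triangle-free simple graph on a finite vertex type (i.e., there are no three pairwise adjacent vertices), let A be its adjacency matrix over the natural numbers, and let t be a vertex. If G contains no cycle of length 5 through t, i.e., there are no pairwise distinct vertices x₁, x₂, x₃, x₄, all distinct from t, with t adjacent to x₁, x₁ adjacent to x₂, x₂ adjacent to x₃, x₃ adjacent to x₄, and x₄ adjacent to t, then (A⁵)_{t,t} = 0. Equivalently, in a triangle-free graph every closed walk of length 5 based at t is a 5-cycle through t. -/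
/-!
`(A⁵)_{t,t}` counts the closed walks `t a b c d t`, so it suffices that each such walk is a
5-cycle. Consecutive vertices differ since `G` is loopless; two vertices two steps apart on one
side of the walk are three steps apart on the other, so if they coincided, that side would be a
triangle.
-/

namespace SimpleGraph

variable {V : Type*} (G : SimpleGraph V)

theorem exists_walk_length_eq_of_adjMatrix_pow_apply_ne_zero [Fintype V] [DecidableEq V]
    [DecidableRel G.Adj] {R : Type*} [Semiring R] {n : ℕ} {u v : V}
    (h : (G.adjMatrix R ^ n) u v ≠ 0) : ∃ p : G.Walk u v, p.length = n := by
  rw [adjMatrix_pow_apply_eq_card_walk] at h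
  have hcard : 0 < Fintype.card {p : G.Walk u v | p.length = n} :=
    Nat.pos_of_ne_zero fun h0 ↦ h (by rw [h0, Nat.cast_zero])
  obtain ⟨⟨p, hp⟩⟩ := Fintype.card_pos_iff.mp hcard
  exact ⟨p, hp⟩

variable {G} in
theorem Walk.exists_adj_of_length_eq_five {t : V} (p : G.Walk t t) (hp : p.length = 5) :
    ∃ a b c d : V, G.Adj t a ∧ G.Adj a b ∧ G.Adj b c ∧ G.Adj c d ∧ G.Adj d t := by
  rcases p with _ | ⟨h₁, _ | ⟨h₂, _ | ⟨h₃, _ | ⟨h₄, _ | ⟨h₅, _ | ⟨_, _⟩⟩⟩⟩⟩⟩ <;>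
    simp at hp
  exact ⟨_, _, _, _, h₁, h₂, h₃, h₄, h₅⟩

theorem pairwise_ne_of_adj_five_cycle (htf : ¬∃ a b c : V, G.Adj a b ∧ G.Adj b c ∧ G.Adj a c)
    {t a b c d : V} (h₁ : G.Adj t a) (h₂ : G.Adj a b) (h₃ : G.Adj b c) (h₄ : G.Adj c d)
    (h₅ : G.Adj d t) : [t, a, b, c, d].Pairwise (· ≠ ·) := by
  have htb : t ≠ b := by rintro rfl; exact htf ⟨t, c, d, h₃, h₄, h₅.symm⟩
  have htc : t ≠ c := by rintro rfl; exact htf ⟨t, a, b, h₁, h₂, h₃.symm⟩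
  have hac : a ≠ c := by rintro rfl; exact htf ⟨t, a, d, h₁, h₄, h₅.symm⟩
  have had : a ≠ d := by rintro rfl; exact htf ⟨a, b, c, h₂, h₃, h₄.symm⟩
  have hbd : b ≠ d := by rintro rfl; exact htf ⟨t, a, b, h₁, h₂, h₅.symm⟩
  simp [h₁.ne, h₂.ne, h₃.ne, h₄.ne, h₅.ne', htb, htc, hac, had, hbd]

end SimpleGraph

/-- In a triangle-free simple graph, if there is no cycle of length 5 through `t`,
then `(A⁵)_{t,t} = 0` for the adjacency matrix `A` over `ℕ`. -/
theorem adjMatrix_pow_five_diag_eq_zero_of_no_five_cycle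
    {V : Type*} [Fintype V] [DecidableEq V]
    (G : SimpleGraph V) [DecidableRel G.Adj]
    (htf : ¬∃ a b c : V, G.Adj a b ∧ G.Adj b c ∧ G.Adj a c)
    (t : V)
    (hno5 : ¬∃ x₁ x₂ x₃ x₄ : V,
      [t, x₁, x₂, x₃, x₄].Pairwise (· ≠ ·) ∧
        G.Adj t x₁ ∧ G.Adj x₁ x₂ ∧ G.Adj x₂ x₃ ∧ G.Adj x₃ x₄ ∧ G.Adj x₄ t) :
    (G.adjMatrix ℕ ^ 5) t t = 0 := by
  by_contra h
  obtain ⟨p, hp⟩ := G.exists_walk_length_eq_of_adjMatrix_pow_apply_ne_zero h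
  obtain ⟨a, b, c, d, h₁, h₂, h₃, h₄, h₅⟩ := p.exists_adj_of_length_eq_five hp
  exact hno5 ⟨a, b, c, d, G.pairwise_ne_of_adj_five_cycle htf h₁ h₂ h₃ h₄ h₅,
    h₁, h₂, h₃, h₄, h₅⟩
end
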